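/- Let n ≥ 1, let Ω ⊆ ℝⁿ be an open set, and let f : Ω → ℝ be a smooth function whose Hessian matrix H(x) = (∂²f/∂xᵢ∂xⱼ(x)) is positive definite at every x ∈ Ω. Assume f is affine Kähler Ricci flat, i.e. ∂²(log det H)/∂xᵢ∂xⱼ ≡ 0 on Ω for all i, j. Set ρ = (det H)^{−1/(n+2)}. Then at every point of Ω the Laplace–Beltrami operator of the Calabi metric satisfies Δ_g ρ = ((n+4)/2) · ‖∇ρ‖²_g / ρ, where ‖∇ρ‖²_g = Σᵢⱼ H^{ij} ∂ᵢρ ∂ⱼρ and Δ_g u = (det H)^{−1/2} Σᵢ ∂ᵢ( (det H)^{1/2} Σⱼ H^{ij} ∂ⱼu ). -/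

import Mathlib

open Matrix

/-- Partial derivative `∂u/∂xᵢ` of a function `u : ℝⁿ → ℝ`. -/
noncomputable def pder (n : ℕ) (i : Fin n) (u : (Fin n → ℝ) → ℝ) (x : Fin n → ℝ) : ℝ :=
  fderiv ℝ u x (Pi.single i 1)

/-- Hessian matrix `H(x) = (∂²f/∂xᵢ∂xⱼ(x))`. -/
noncomputable def Hess (n : ℕ) (f : (Fin n → ℝ) → ℝ) (x : Fin n → ℝ) :
    Matrix (Fin n) (Fin n) ℝ :=
  Matrix.of fun i j => pder n i (pder n j f) x

/-- `ρ = (det H)^(−1/(n+2))`. -/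
noncomputable def rho (n : ℕ) (f : (Fin n → ℝ) → ℝ) (x : Fin n → ℝ) : ℝ :=
  (Hess n f x).det ^ (-(1 : ℝ) / ((n : ℝ) + 2))

/-- `⟨∇u, ∇v⟩_g = Σᵢⱼ H^{ij} ∂ᵢu ∂ⱼv` with respect to the Calabi metric of `f`. -/
noncomputable def gradInner (n : ℕ) (f u v : (Fin n → ℝ) → ℝ) (x : Fin n → ℝ) : ℝ :=
  ∑ i, ∑ j, (Hess n f x)⁻¹ i j * pder n i u x * pder n j v x

/-- `Φ = ‖∇ρ‖²_g / ρ²`. -/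
noncomputable def Phi (n : ℕ) (f : (Fin n → ℝ) → ℝ) (x : Fin n → ℝ) : ℝ :=
  gradInner n f (rho n f) (rho n f) x / (rho n f x) ^ 2

/-- Laplace–Beltrami operator of the Calabi metric:
`Δ_g u = (det H)^{−1/2} Σᵢ ∂ᵢ( (det H)^{1/2} Σⱼ H^{ij} ∂ⱼu )`. -/
noncomputable def lapBel (n : ℕ) (f u : (Fin n → ℝ) → ℝ) (x : Fin n → ℝ) : ℝ :=
  (Hess n f x).det ^ (-(1 : ℝ) / 2) *
    ∑ i, pder n i (fun y => (Hess n f y).det ^ ((1 : ℝ) / 2) *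
      ∑ j, (Hess n f y)⁻¹ i j * pder n j u y) x

/-- Completeness of the Calabi metric `g = Σ fᵢⱼ dxᵢ dxⱼ` on `Ω`: every C¹ curve
`γ : [0,1) → Ω` eventually leaving every compact subset of `Ω` has infinite length. -/
def CalabiComplete (n : ℕ) (Ω : Set (Fin n → ℝ)) (f : (Fin n → ℝ) → ℝ) : Prop :=
  ∀ γ : ℝ → (Fin n → ℝ), ContDiffOn ℝ 1 γ (Set.Ico (0 : ℝ) 1) →
    (∀ t ∈ Set.Ico (0 : ℝ) 1, γ t ∈ Ω) →
    (∀ K : Set (Fin n → ℝ), K ⊆ Ω → IsCompact K →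
      ∃ t₀, t₀ < 1 ∧ ∀ t, t₀ < t → t < 1 → γ t ∉ K) →
    ∫⁻ t in Set.Ioo (0 : ℝ) 1,
      ENNReal.ofReal (Real.sqrt ((Hess n f (γ t)).mulVec (deriv γ t) ⬝ᵥ deriv γ t)) = ⊤

/-- `f` coincides on `Ω` with a quadratic polynomial with symmetric positive definite
quadratic part. -/
def IsQuadraticOn (n : ℕ) (Ω : Set (Fin n → ℝ)) (f : (Fin n → ℝ) → ℝ) : Prop :=
  ∃ A : Matrix (Fin n) (Fin n) ℝ, A.IsSymm ∧ A.PosDef ∧ ∃ b : Fin n → ℝ, ∃ c : ℝ,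
    ∀ x ∈ Ω, f x = (1 / 2) * (A.mulVec x ⬝ᵥ x) + b ⬝ᵥ x + c

section AuxLemmas

open scoped ContDiff Topology

variable {n : ℕ}

lemma pder_congr {i : Fin n} {u v : (Fin n → ℝ) → ℝ} {x} (h : u =ᶠ[nhds x] v) :
    pder n i u x = pder n i v x := by
  unfold pder; rw [h.fderiv_eq]

lemma pder_hasFDerivAt {i : Fin n} {u : (Fin n → ℝ) → ℝ} {x} {u' : (Fin n → ℝ) →L[ℝ] ℝ}
    (h : HasFDerivAt u u' x) : pder n i u x = u' (Pi.single i 1) := by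
  unfold pder; rw [h.fderiv]

lemma pder_sum {ι : Type*} {s : Finset ι} {i : Fin n} {u : ι → (Fin n → ℝ) → ℝ} {x}
    (h : ∀ j ∈ s, DifferentiableAt ℝ (u j) x) :
    pder n i (fun y => ∑ j ∈ s, u j y) x = ∑ j ∈ s, pder n i (u j) x := by
  have H := HasFDerivAt.fun_sum (fun j (hj : j ∈ s) => (h j hj).hasFDerivAt)
  rw [pder_hasFDerivAt H, ContinuousLinearMap.sum_apply]
  rfl

lemma pder_mul {i : Fin n} {u v : (Fin n → ℝ) → ℝ} {x}
    (hu : DifferentiableAt ℝ u x) (hv : DifferentiableAt ℝ v x) :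
    pder n i (fun y => u y * v y) x = pder n i u x * v x + u x * pder n i v x := by
  have H := hu.hasFDerivAt.fun_mul hv.hasFDerivAt
  rw [pder_hasFDerivAt H]
  simp [pder]
  ring

lemma pder_const_mul {i : Fin n} {u : (Fin n → ℝ) → ℝ} {x} (c : ℝ)
    (hu : DifferentiableAt ℝ u x) :
    pder n i (fun y => c * u y) x = c * pder n i u x := by
  have H := hu.hasFDerivAt.const_mul c
  rw [pder_hasFDerivAt H]
  simp [pder]

lemma pder_prod {ι : Type*} [DecidableEq ι] {s : Finset ι} {i : Fin n}
    {u : ι → (Fin n → ℝ) → ℝ} {x}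
    (h : ∀ j ∈ s, DifferentiableAt ℝ (u j) x) :
    pder n i (fun y => ∏ j ∈ s, u j y) x
      = ∑ j ∈ s, (∏ k ∈ s.erase j, u k x) * pder n i (u j) x := by
  have H := HasFDerivAt.finset_prod (fun j (hj : j ∈ s) => (h j hj).hasFDerivAt)
  rw [pder_hasFDerivAt H, ContinuousLinearMap.sum_apply]
  simp [pder]

lemma pder_rpow {i : Fin n} {u : (Fin n → ℝ) → ℝ} {x}
    (hu : DifferentiableAt ℝ u x) (h0 : u x ≠ 0) (r : ℝ) :
    pder n i (fun y => u y ^ r) x = r * u x ^ (r - 1) * pder n i u x := by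
  have H : HasFDerivAt (fun y => u y ^ r) ((r * u x ^ (r - 1)) • fderiv ℝ u x) x :=
    (Real.hasDerivAt_rpow_const (p := r) (Or.inl h0)).comp_hasFDerivAt x hu.hasFDerivAt
  rw [pder_hasFDerivAt H]
  simp [pder, mul_assoc]

lemma pder_inv {i : Fin n} {u : (Fin n → ℝ) → ℝ} {x}
    (hu : DifferentiableAt ℝ u x) (h0 : u x ≠ 0) :
    pder n i (fun y => (u y)⁻¹) x = -pder n i u x / u x ^ 2 := by
  have H : HasFDerivAt (fun y => (u y)⁻¹) (-(u x ^ 2)⁻¹ • fderiv ℝ u x) x :=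
    (hasDerivAt_inv h0).comp_hasFDerivAt x hu.hasFDerivAt
  rw [pder_hasFDerivAt H]
  simp [pder]
  ring

lemma pder_log {i : Fin n} {u : (Fin n → ℝ) → ℝ} {x}
    (hu : DifferentiableAt ℝ u x) (h0 : u x ≠ 0) :
    pder n i (fun y => Real.log (u y)) x = pder n i u x / u x := by
  have H : HasFDerivAt (fun y => Real.log (u y)) ((u x)⁻¹ • fderiv ℝ u x) x :=
    (Real.hasDerivAt_log h0).comp_hasFDerivAt x hu.hasFDerivAt
  rw [pder_hasFDerivAt H]
  simp [pder]
  ring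

lemma contDiffAt_pder {i : Fin n} {u : (Fin n → ℝ) → ℝ} {x}
    (h : ContDiffAt ℝ ∞ u x) : ContDiffAt ℝ ∞ (pder n i u) x := by
  have h' : ContDiffAt ℝ ∞ (fderiv ℝ u) x := h.fderiv_right (by simp)
  exact h'.clm_apply contDiffAt_const

lemma pder_comm {u : (Fin n → ℝ) → ℝ} {x} (h : ContDiffAt ℝ ∞ u x) (i a : Fin n) :
    pder n i (pder n a u) x = pder n a (pder n i u) x := by
  have hd : DifferentiableAt ℝ (fderiv ℝ u) x :=
    (h.fderiv_right (m := ∞) (by simp)).differentiableAt (by simp)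
  have key : ∀ v w : Fin n → ℝ,
      fderiv ℝ (fun y => fderiv ℝ u y w) x v = fderiv ℝ (fderiv ℝ u) x v w := by
    intro v w
    rw [fderiv_clm_apply hd (differentiableAt_const w)]
    simp
  have hsymm := h.isSymmSndFDerivAt (by simp; exact WithTop.coe_le_coe.mpr le_top)
  show fderiv ℝ (fun y => fderiv ℝ u y (Pi.single a 1)) x (Pi.single i 1) = _
  rw [key]
  rw [hsymm]
  exact (key _ _).symm

section MatrixLayer

variable {A : (Fin n → ℝ) → Matrix (Fin n) (Fin n) ℝ} {x : Fin n → ℝ}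

lemma contDiffAt_matrix_det (hA : ∀ p q, ContDiffAt ℝ ∞ (fun y => A y p q) x) :
    ContDiffAt ℝ ∞ (fun y => (A y).det) x := by
  have hfun : (fun y => (A y).det)
      = fun y => ∑ σ : Equiv.Perm (Fin n), ((Equiv.Perm.sign σ : ℤ) : ℝ) * ∏ j, A y (σ j) j :=
    funext fun y => Matrix.det_apply' (A y)
  rw [hfun]
  exact ContDiffAt.sum fun σ _ => contDiffAt_const.mul (contDiffAt_prod fun p _ => hA (σ p) p)

lemma contDiffAt_matrix_adjugate (hA : ∀ p q, ContDiffAt ℝ ∞ (fun y => A y p q) x) (i j : Fin n) :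
    ContDiffAt ℝ ∞ (fun y => (A y).adjugate i j) x := by
  simp only [Matrix.adjugate_apply]
  apply contDiffAt_matrix_det
  intro p q
  simp only [Matrix.updateRow_apply]
  rcases eq_or_ne p j with h | h
  · simp only [if_pos h]; exact contDiffAt_const
  · simp only [if_neg h]; exact hA p q

lemma matrix_inv_apply_eq (M : Matrix (Fin n) (Fin n) ℝ) (i j : Fin n) :
    M⁻¹ i j = (M.det)⁻¹ * M.adjugate i j := by
  rw [Matrix.inv_def]
  simp [Ring.inverse_eq_inv']

lemma contDiffAt_matrix_inv (hA : ∀ p q, ContDiffAt ℝ ∞ (fun y => A y p q) x)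
    (hdet : (A x).det ≠ 0) (i j : Fin n) :
    ContDiffAt ℝ ∞ (fun y => (A y)⁻¹ i j) x := by
  simp only [matrix_inv_apply_eq]
  exact ((contDiffAt_matrix_det hA).inv hdet).mul (contDiffAt_matrix_adjugate hA i j)

lemma det_updateColumn_expand (M : Matrix (Fin n) (Fin n) ℝ) (k : Fin n) (c : Fin n → ℝ) :
    (M.updateCol k c).det
      = ∑ σ : Equiv.Perm (Fin n), ((Equiv.Perm.sign σ : ℤ) : ℝ) *
          ((∏ j ∈ Finset.univ.erase k, M (σ j) j) * c (σ k)) := by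
  rw [Matrix.det_apply']
  refine Finset.sum_congr rfl fun σ _ => ?_
  congr 1
  rw [← Finset.mul_prod_erase Finset.univ _ (Finset.mem_univ k)]
  have h1 : M.updateCol k c (σ k) k = c (σ k) := by
    rw [Matrix.updateCol_apply, if_pos rfl]
  have h2 : ∏ j ∈ Finset.univ.erase k, M.updateCol k c (σ j) j
      = ∏ j ∈ Finset.univ.erase k, M (σ j) j := by
    refine Finset.prod_congr rfl fun j hj => ?_
    rw [Matrix.updateCol_apply, if_neg (Finset.ne_of_mem_erase hj)]
  rw [h1, h2, mul_comm]

lemma pder_matrix_det (b : Fin n) (hA : ∀ p q, DifferentiableAt ℝ (fun y => A y p q) x) :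
    pder n b (fun y => (A y).det) x
      = ∑ k, ∑ q, (A x).adjugate k q * pder n b (fun y => A y q k) x := by
  classical
  have hfun : (fun y => (A y).det)
      = fun y => ∑ σ : Equiv.Perm (Fin n), ((Equiv.Perm.sign σ : ℤ) : ℝ) * ∏ j, A y (σ j) j :=
    funext fun y => Matrix.det_apply' (A y)
  have hprod : ∀ σ : Equiv.Perm (Fin n), DifferentiableAt ℝ (fun y => ∏ j, A y (σ j) j) x :=
    fun σ => (HasFDerivAt.finset_prod fun j _ => (hA (σ j) j).hasFDerivAt).differentiableAt
  rw [hfun, pder_sum fun σ _ => (hprod σ).const_mul _]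
  have step : ∀ σ : Equiv.Perm (Fin n),
      pder n b (fun y => ((Equiv.Perm.sign σ : ℤ) : ℝ) * ∏ j, A y (σ j) j) x
        = ∑ k, ((Equiv.Perm.sign σ : ℤ) : ℝ) *
            ((∏ j ∈ Finset.univ.erase k, A x (σ j) j) *
              pder n b (fun y => A y (σ k) k) x) := by
    intro σ
    rw [pder_const_mul _ (hprod σ), pder_prod fun j _ => hA (σ j) j, Finset.mul_sum]
  simp only [step]
  rw [Finset.sum_comm]
  refine Finset.sum_congr rfl fun k _ => ?_
  have hdc := det_updateColumn_expand (A x) k (fun p => pder n b (fun y => A y p k) x)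
  rw [← hdc, ← Matrix.cramer_apply, Matrix.cramer_eq_adjugate_mulVec]
  simp [Matrix.mulVec, dotProduct]

end MatrixLayer

theorem laplacian_rho_ricci_flat'
    (hn : 1 ≤ n) (hΩ : IsOpen Ω)
    (hf : ContDiffOn ℝ (⊤ : ℕ∞) f Ω)
    (hpos : ∀ x ∈ Ω, (Hess n f x).PosDef)
    (hric : ∀ x ∈ Ω, ∀ i j : Fin n,
      pder n i (pder n j (fun y => Real.log (Hess n f y).det)) x = 0) :
    ∀ x ∈ Ω,
      lapBel n f (rho n f) x =
        (((n : ℝ) + 4) / 2) * gradInner n f (rho n f) (rho n f) x / rho n f x := by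
  intro x hx
  classical
  have hle1 : (∞ : WithTop ℕ∞) ≠ 0 := by simp
  set r : ℝ := -(1 : ℝ) / ((n : ℝ) + 2) with hrdef
  set e : ℝ := (1 : ℝ) / 2 + (r - 1) with hedef
  -- smoothness of f at points of Ω
  have hfC : ∀ y ∈ Ω, ContDiffAt ℝ ∞ f y := fun y hy =>
    ((hf y hy).contDiffAt (hΩ.mem_nhds hy)).of_le (by simp)
  -- entries of the Hessian
  have hHC : ∀ (p q : Fin n), ∀ y ∈ Ω, ContDiffAt ℝ ∞ (fun z => Hess n f z p q) y :=
    fun p q y hy => contDiffAt_pder (contDiffAt_pder (hfC y hy))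
  have hDC : ∀ y ∈ Ω, ContDiffAt ℝ ∞ (fun z => (Hess n f z).det) y :=
    fun y hy => contDiffAt_matrix_det (fun p q => hHC p q y hy)
  have hDpos : ∀ y ∈ Ω, 0 < (Hess n f y).det := fun y hy => (hpos y hy).det_pos
  have hDdiff : ∀ y ∈ Ω, DifferentiableAt ℝ (fun z => (Hess n f z).det) y :=
    fun y hy => (hDC y hy).differentiableAt hle1
  have hGC : ∀ (p q : Fin n), ∀ y ∈ Ω, ContDiffAt ℝ ∞ (fun z => (Hess n f z)⁻¹ p q) y :=
    fun p q y hy => contDiffAt_matrix_inv (fun a b => hHC a b y hy) (hDpos y hy).ne' p q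
  have hpDC : ∀ (j : Fin n), ∀ y ∈ Ω, ContDiffAt ℝ ∞ (pder n j (fun z => (Hess n f z).det)) y :=
    fun j y hy => contDiffAt_pder (hDC y hy)
  -- derivative of rho on Ω
  have hrho : ∀ y ∈ Ω, ∀ j, pder n j (rho n f) y
      = r * (Hess n f y).det ^ (r - 1) * pder n j (fun z => (Hess n f z).det) y := by
    intro y hy j
    have h2 : rho n f = fun z : Fin n → ℝ => (Hess n f z).det ^ r := by
      funext z; rw [rho, hrdef]
    rw [h2, pder_rpow (hDdiff y hy) (hDpos y hy).ne' r]
  -- adjugate in terms of the inverse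
  have hadj : ∀ y ∈ Ω, ∀ p q, (Hess n f y).adjugate p q
      = (Hess n f y).det * (Hess n f y)⁻¹ p q := by
    intro y hy p q
    rw [matrix_inv_apply_eq, ← mul_assoc, mul_inv_cancel₀ (hDpos y hy).ne', one_mul]
  -- symmetry facts
  have hHsymm : ∀ y ∈ Ω, ∀ p q, Hess n f y p q = Hess n f y q p := by
    intro y hy p q
    have h := (hpos y hy).1
    have h2 := congrFun (congrFun h q) p
    simpa [Matrix.conjTranspose_apply] using h2
  have hgsymm : ∀ p q, (Hess n f x)⁻¹ p q = (Hess n f x)⁻¹ q p := by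
    intro p q
    have hsym : (Hess n f x)ᵀ = Hess n f x := by
      ext a b; exact hHsymm x hx b a
    have ht := Matrix.transpose_nonsing_inv (Hess n f x)
    calc (Hess n f x)⁻¹ p q = ((Hess n f x)⁻¹)ᵀ q p := rfl
      _ = ((Hess n f x)ᵀ)⁻¹ q p := by rw [ht]
      _ = (Hess n f x)⁻¹ q p := by rw [hsym]
  have hTsym_pq : ∀ (i p q : Fin n), pder n i (fun z => Hess n f z p q) x
      = pder n i (fun z => Hess n f z q p) x := by
    intro i p q
    apply pder_congr
    filter_upwards [hΩ.mem_nhds hx] with y hy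
    exact hHsymm y hy p q
  have hTsym_ip : ∀ (i p q : Fin n), pder n i (fun z => Hess n f z p q) x
      = pder n p (fun z => Hess n f z i q) x := by
    intro i p q
    exact pder_comm (contDiffAt_pder (hfC x hx)) i p
  -- Jacobi formula on Ω
  have hJac : ∀ y ∈ Ω, ∀ b, pder n b (fun z => (Hess n f z).det) y
      = (Hess n f y).det * ∑ k, ∑ q, (Hess n f y)⁻¹ k q *
          pder n b (fun z => Hess n f z q k) y := by
    intro y hy b
    rw [pder_matrix_det b (fun p q => (hHC p q y hy).differentiableAt hle1), Finset.mul_sum]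
    refine Finset.sum_congr rfl fun k _ => ?_
    rw [Finset.mul_sum]
    refine Finset.sum_congr rfl fun q _ => ?_
    rw [hadj y hy k q]; ring
  -- Jacobi at x, reorganized
  have hJx : ∀ b : Fin n, ∑ i, ∑ a, (Hess n f x)⁻¹ i a * pder n i (fun z => Hess n f z a b) x
      = pder n b (fun z => (Hess n f z).det) x / (Hess n f x).det := by
    intro b
    rw [hJac x hx b, mul_div_cancel_left₀ _ (hDpos x hx).ne']
    refine Finset.sum_congr rfl fun i _ => Finset.sum_congr rfl fun a _ => ?_
    congr 1
    rw [hTsym_ip b a i, hTsym_pq a b i, hTsym_ip a i b]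
  -- Ricci flatness in determinant form at x
  have hricD : ∀ i j : Fin n, pder n i (pder n j (fun z => (Hess n f z).det)) x
      = pder n i (fun z => (Hess n f z).det) x * pder n j (fun z => (Hess n f z).det) x
        / (Hess n f x).det := by
    intro i j
    have hev : (pder n j (fun z => Real.log (Hess n f z).det)) =ᶠ[𝓝 x]
        (fun y => pder n j (fun z => (Hess n f z).det) y * ((Hess n f y).det)⁻¹) := by
      filter_upwards [hΩ.mem_nhds hx] with y hy
      rw [pder_log (hDdiff y hy) (hDpos y hy).ne', div_eq_mul_inv]
    have h0 : pder n i
        (fun y => pder n j (fun z => (Hess n f z).det) y * ((Hess n f y).det)⁻¹) x = 0 := by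
      rw [← pder_congr hev]; exact hric x hx i j
    rw [pder_mul ((hpDC j x hx).differentiableAt hle1)
      ((hDdiff x hx).fun_inv (hDpos x hx).ne'), pder_inv (hDdiff x hx) (hDpos x hx).ne'] at h0
    have hd := (hDpos x hx).ne'
    field_simp at h0
    have h1 : (pder n i (pder n j fun z => (Hess n f z).det) x * (Hess n f x).det)
          * (Hess n f x).det
        = (pder n j (fun z => (Hess n f z).det) x
            * pder n i (fun z => (Hess n f z).det) x) * (Hess n f x).det := by
      linear_combination (Hess n f x).det * h0
    have h2 := mul_right_cancel₀ hd h1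
    rw [eq_div_iff hd]
    linear_combination h2
  -- derivative of inverse entries at x
  have hGder : ∀ (i p q : Fin n), pder n i (fun y => (Hess n f y)⁻¹ p q) x
      = -∑ a, ∑ k, (Hess n f x)⁻¹ p a * pder n i (fun z => Hess n f z a k) x
          * (Hess n f x)⁻¹ k q := by
    intro i p q
    have hOrth : ∀ a, ∑ k, Hess n f x a k * pder n i (fun y => (Hess n f y)⁻¹ k q) x
        = -∑ k, pder n i (fun z => Hess n f z a k) x * (Hess n f x)⁻¹ k q := by
      intro a
      have hev : (fun y => ∑ k, Hess n f y a k * (Hess n f y)⁻¹ k q) =ᶠ[𝓝 x]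
          (fun _ => if a = q then (1:ℝ) else 0) := by
        filter_upwards [hΩ.mem_nhds hx] with y hy
        have hunit : IsUnit (Hess n f y).det := isUnit_iff_ne_zero.mpr (hDpos y hy).ne'
        have h2 := congrFun (congrFun (Matrix.mul_nonsing_inv (Hess n f y) hunit) a) q
        simpa [Matrix.mul_apply, Matrix.one_apply] using h2
      have h0 : pder n i (fun y => ∑ k, Hess n f y a k * (Hess n f y)⁻¹ k q) x = 0 := by
        rw [pder_congr hev, pder_hasFDerivAt (hasFDerivAt_const _ _)]
        simp
      rw [pder_sum (fun k _ => ((hHC a k x hx).differentiableAt hle1).fun_mul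
          ((hGC k q x hx).differentiableAt hle1))] at h0
      have hexp : ∀ k ∈ Finset.univ (α := Fin n),
          pder n i (fun y => Hess n f y a k * (Hess n f y)⁻¹ k q) x
          = pder n i (fun z => Hess n f z a k) x * (Hess n f x)⁻¹ k q
            + Hess n f x a k * pder n i (fun y => (Hess n f y)⁻¹ k q) x :=
        fun k _ => pder_mul ((hHC a k x hx).differentiableAt hle1)
          ((hGC k q x hx).differentiableAt hle1)
      rw [Finset.sum_congr rfl hexp, Finset.sum_add_distrib] at h0
      linarith [h0]
    have hGH : ∀ k, (∑ a, (Hess n f x)⁻¹ p a * Hess n f x a k) = if p = k then (1:ℝ) else 0 := by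
      intro k
      have hunit : IsUnit (Hess n f x).det := isUnit_iff_ne_zero.mpr (hDpos x hx).ne'
      have h2 := congrFun (congrFun (Matrix.nonsing_inv_mul (Hess n f x) hunit) p) k
      simpa [Matrix.mul_apply, Matrix.one_apply] using h2
    have hPp : pder n i (fun y => (Hess n f y)⁻¹ p q) x
        = ∑ a, (Hess n f x)⁻¹ p a * ∑ k, Hess n f x a k
            * pder n i (fun y => (Hess n f y)⁻¹ k q) x := by
      have h1 : ∑ a, (Hess n f x)⁻¹ p a * ∑ k, Hess n f x a k
            * pder n i (fun y => (Hess n f y)⁻¹ k q) x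
          = ∑ k, (∑ a, (Hess n f x)⁻¹ p a * Hess n f x a k)
            * pder n i (fun y => (Hess n f y)⁻¹ k q) x := by
        simp_rw [Finset.mul_sum, Finset.sum_mul]
        rw [Finset.sum_comm]
        exact Finset.sum_congr rfl fun k _ => Finset.sum_congr rfl fun a _ => by ring
      rw [h1]
      simp [hGH, Finset.sum_ite_eq]
    rw [hPp]
    have h2 : ∀ a ∈ Finset.univ (α := Fin n), (Hess n f x)⁻¹ p a * ∑ k, Hess n f x a k
          * pder n i (fun y => (Hess n f y)⁻¹ k q) x
        = -∑ k, (Hess n f x)⁻¹ p a * pder n i (fun z => Hess n f z a k) x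
            * (Hess n f x)⁻¹ k q := by
      intro a _
      rw [hOrth a, mul_neg, Finset.mul_sum]
      congr 1
      exact Finset.sum_congr rfl fun k _ => by ring
    rw [Finset.sum_congr rfl h2]
    simp
  -- the single-index sums
  set Di : Fin n → ℝ := fun i => pder n i (fun z => (Hess n f z).det) x with hDidef
  set Q : ℝ := ∑ i, ∑ j, (Hess n f x)⁻¹ i j * Di i * Di j with hQdef
  -- differentiability of the pieces of Gfun at x
  have hSdiff : ∀ i : Fin n, DifferentiableAt ℝ
      (fun y => ∑ j, (Hess n f y)⁻¹ i j * pder n j (fun z => (Hess n f z).det) y) x := by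
    intro i
    exact DifferentiableAt.fun_sum fun j _ => ((hGC i j x hx).differentiableAt hle1).fun_mul
      ((hpDC j x hx).differentiableAt hle1)
  -- eventual equality of the integrand
  have hFG : ∀ i : Fin n,
      (fun y => (Hess n f y).det ^ ((1:ℝ)/2) * ∑ j, (Hess n f y)⁻¹ i j * pder n j (rho n f) y)
        =ᶠ[𝓝 x] (fun y => r * ((Hess n f y).det ^ e *
            ∑ j, (Hess n f y)⁻¹ i j * pder n j (fun z => (Hess n f z).det) y)) := by
    intro i
    filter_upwards [hΩ.mem_nhds hx] with y hy
    have h1 : ∑ j, (Hess n f y)⁻¹ i j * pder n j (rho n f) y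
        = r * (Hess n f y).det ^ (r - 1)
          * ∑ j, (Hess n f y)⁻¹ i j * pder n j (fun z => (Hess n f z).det) y := by
      rw [Finset.mul_sum]
      exact Finset.sum_congr rfl fun j _ => by rw [hrho y hy j]; ring
    rw [h1]
    have h2 : (Hess n f y).det ^ ((1:ℝ)/2) * (Hess n f y).det ^ (r - 1)
        = (Hess n f y).det ^ e := by
      rw [← Real.rpow_add (hDpos y hy), hedef]
    rw [← h2]; ring
  -- the key sum computation
  have hsum : ∑ i, pder n i (fun y => r * ((Hess n f y).det ^ e *
        ∑ j, (Hess n f y)⁻¹ i j * pder n j (fun z => (Hess n f z).det) y)) x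
      = r * e * (Hess n f x).det ^ (e - 1) * Q := by
    have hAe : DifferentiableAt ℝ (fun y => (Hess n f y).det ^ e) x := by
      have H : HasFDerivAt (fun y => (Hess n f y).det ^ e)
          ((e * (Hess n f x).det ^ (e - 1)) • fderiv ℝ (fun z => (Hess n f z).det) x) x :=
        (Real.hasDerivAt_rpow_const (p := e)
          (Or.inl (hDpos x hx).ne')).comp_hasFDerivAt (h₂ := fun t => t ^ e) x (hDdiff x hx).hasFDerivAt
      exact H.differentiableAt
    have hstep : ∀ i : Fin n, pder n i (fun y => r * ((Hess n f y).det ^ e *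
          ∑ j, (Hess n f y)⁻¹ i j * pder n j (fun z => (Hess n f z).det) y)) x
        = r * (e * (Hess n f x).det ^ (e - 1) * Di i * (∑ j, (Hess n f x)⁻¹ i j * Di j)
            + (Hess n f x).det ^ e * ∑ j, (pder n i (fun y => (Hess n f y)⁻¹ i j) x * Di j
                + (Hess n f x)⁻¹ i j * (Di i * Di j / (Hess n f x).det))) := by
      intro i
      rw [pder_const_mul r (hAe.fun_mul (hSdiff i)), pder_mul hAe (hSdiff i),
        pder_rpow (hDdiff x hx) (hDpos x hx).ne' e,
        pder_sum (fun j _ => ((hGC i j x hx).differentiableAt hle1).fun_mul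
          ((hpDC j x hx).differentiableAt hle1))]
      have hterm : ∀ j ∈ Finset.univ (α := Fin n),
          pder n i (fun y => (Hess n f y)⁻¹ i j
              * pder n j (fun z => (Hess n f z).det) y) x
          = pder n i (fun y => (Hess n f y)⁻¹ i j) x * Di j
            + (Hess n f x)⁻¹ i j * (Di i * Di j / (Hess n f x).det) := by
        intro j _
        rw [pder_mul ((hGC i j x hx).differentiableAt hle1)
          ((hpDC j x hx).differentiableAt hle1), hricD i j]
      rw [Finset.sum_congr rfl hterm]
    rw [Finset.sum_congr rfl (fun i _ => hstep i)]
    have hK1 : ∑ i, Di i * ∑ j, (Hess n f x)⁻¹ i j * Di j = Q := by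
      rw [hQdef]
      refine Finset.sum_congr rfl fun i _ => ?_
      rw [Finset.mul_sum]
      exact Finset.sum_congr rfl fun j _ => by ring
    have hK3 : ∑ i : Fin n, ∑ j, (Hess n f x)⁻¹ i j * (Di i * Di j / (Hess n f x).det)
        = Q / (Hess n f x).det := by
      rw [hQdef, Finset.sum_div]
      refine Finset.sum_congr rfl fun i _ => ?_
      rw [Finset.sum_div]
      exact Finset.sum_congr rfl fun j _ => by ring
    have hK2 : ∑ i : Fin n, ∑ j, pder n i (fun y => (Hess n f y)⁻¹ i j) x * Di j
        = -(Q / (Hess n f x).det) := by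
      have h1 : ∀ i ∈ Finset.univ (α := Fin n), ∀ j ∈ Finset.univ (α := Fin n),
          pder n i (fun y => (Hess n f y)⁻¹ i j) x * Di j
          = -∑ a : Fin n, ∑ k : Fin n,
              ((Hess n f x)⁻¹ i a * pder n i (fun z => Hess n f z a k) x)
                * ((Hess n f x)⁻¹ k j * Di j) := by
        intro i _ j _
        rw [hGder i i j, neg_mul, Finset.sum_mul]
        congr 1
        refine Finset.sum_congr rfl fun a _ => ?_
        rw [Finset.sum_mul]
        exact Finset.sum_congr rfl fun k _ => by ring
      rw [Finset.sum_congr rfl (fun i hi => Finset.sum_congr rfl (h1 i hi))]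
      simp only [Finset.sum_neg_distrib]
      congr 1
      have hswap : ∑ i : Fin n, ∑ j : Fin n, ∑ a : Fin n, ∑ k : Fin n,
            ((Hess n f x)⁻¹ i a * pder n i (fun z => Hess n f z a k) x)
              * ((Hess n f x)⁻¹ k j * Di j)
          = ∑ k : Fin n, ∑ i : Fin n, ∑ a : Fin n, ∑ j : Fin n,
            ((Hess n f x)⁻¹ i a * pder n i (fun z => Hess n f z a k) x)
              * ((Hess n f x)⁻¹ k j * Di j) := by
        calc ∑ i : Fin n, ∑ j : Fin n, ∑ a : Fin n, ∑ k : Fin n,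
              ((Hess n f x)⁻¹ i a * pder n i (fun z => Hess n f z a k) x)
                * ((Hess n f x)⁻¹ k j * Di j)
            = ∑ i : Fin n, ∑ k : Fin n, ∑ j : Fin n, ∑ a : Fin n,
              ((Hess n f x)⁻¹ i a * pder n i (fun z => Hess n f z a k) x)
                * ((Hess n f x)⁻¹ k j * Di j) := by
              refine Finset.sum_congr rfl fun i _ => ?_
              rw [show (∑ j : Fin n, ∑ a : Fin n, ∑ k : Fin n,
                  ((Hess n f x)⁻¹ i a * pder n i (fun z => Hess n f z a k) x)
                    * ((Hess n f x)⁻¹ k j * Di j))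
                = ∑ j : Fin n, ∑ k : Fin n, ∑ a : Fin n,
                  ((Hess n f x)⁻¹ i a * pder n i (fun z => Hess n f z a k) x)
                    * ((Hess n f x)⁻¹ k j * Di j)
                from Finset.sum_congr rfl fun j _ => Finset.sum_comm]
              exact Finset.sum_comm
          _ = ∑ k : Fin n, ∑ i : Fin n, ∑ j : Fin n, ∑ a : Fin n,
              ((Hess n f x)⁻¹ i a * pder n i (fun z => Hess n f z a k) x)
                * ((Hess n f x)⁻¹ k j * Di j) := Finset.sum_comm
          _ = ∑ k : Fin n, ∑ i : Fin n, ∑ a : Fin n, ∑ j : Fin n,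
              ((Hess n f x)⁻¹ i a * pder n i (fun z => Hess n f z a k) x)
                * ((Hess n f x)⁻¹ k j * Di j) :=
              Finset.sum_congr rfl fun k _ => Finset.sum_congr rfl fun i _ => Finset.sum_comm
      rw [hswap]
      have hk : ∀ k ∈ Finset.univ (α := Fin n), ∑ i : Fin n, ∑ a : Fin n, ∑ j : Fin n,
            ((Hess n f x)⁻¹ i a * pder n i (fun z => Hess n f z a k) x)
              * ((Hess n f x)⁻¹ k j * Di j)
          = (Di k / (Hess n f x).det) * ∑ j, (Hess n f x)⁻¹ k j * Di j := by
        intro k _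
        have h2 : ∀ i ∈ Finset.univ (α := Fin n), ∀ a ∈ Finset.univ (α := Fin n),
            ∑ j : Fin n, ((Hess n f x)⁻¹ i a * pder n i (fun z => Hess n f z a k) x)
              * ((Hess n f x)⁻¹ k j * Di j)
            = ((Hess n f x)⁻¹ i a * pder n i (fun z => Hess n f z a k) x)
              * ∑ j, (Hess n f x)⁻¹ k j * Di j :=
          fun i _ a _ => (Finset.mul_sum _ _ _).symm
        rw [Finset.sum_congr rfl (fun i hi => Finset.sum_congr rfl (h2 i hi))]
        simp only [← Finset.sum_mul]
        rw [hJx k]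
      rw [Finset.sum_congr rfl hk, hQdef, Finset.sum_div]
      refine Finset.sum_congr rfl fun k _ => ?_
      rw [Finset.sum_div, Finset.mul_sum]
      exact Finset.sum_congr rfl fun j _ => by ring
    have hA : ∑ i, e * (Hess n f x).det ^ (e - 1) * Di i
          * (∑ j, (Hess n f x)⁻¹ i j * Di j)
        = e * (Hess n f x).det ^ (e - 1) * Q := by
      rw [← hK1, Finset.mul_sum]
      exact Finset.sum_congr rfl fun i _ => by ring
    have hB : ∑ i : Fin n, (Hess n f x).det ^ e
          * ∑ j, (pder n i (fun y => (Hess n f y)⁻¹ i j) x * Di j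
              + (Hess n f x)⁻¹ i j * (Di i * Di j / (Hess n f x).det)) = 0 := by
      rw [← Finset.mul_sum]
      simp only [Finset.sum_add_distrib]
      rw [hK2, hK3]
      ring
    rw [← Finset.mul_sum, Finset.sum_add_distrib, hA, hB]
    ring
  -- final assembly
  have hlap : ∑ i, pder n i (fun y => (Hess n f y).det ^ ((1:ℝ)/2)
        * ∑ j, (Hess n f y)⁻¹ i j * pder n j (rho n f) y) x
      = r * e * (Hess n f x).det ^ (e - 1) * Q := by
    rw [← hsum]
    exact Finset.sum_congr rfl fun i _ => pder_congr (hFG i)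
  have hgi : gradInner n f (rho n f) (rho n f) x
      = r * r * ((Hess n f x).det ^ (r - 1) * (Hess n f x).det ^ (r - 1)) * Q := by
    simp only [gradInner]
    rw [hQdef, Finset.mul_sum]
    refine Finset.sum_congr rfl fun i _ => ?_
    rw [Finset.mul_sum]
    refine Finset.sum_congr rfl fun j _ => ?_
    rw [hrho x hx i, hrho x hx j]
    simp only [hDidef]
    ring
  have hrhox : rho n f x = (Hess n f x).det ^ r := by rw [rho, hrdef]
  simp only [lapBel]
  rw [hlap, hgi, hrhox]
  have hd := hDpos x hx
  have h1 : (Hess n f x).det ^ (-(1:ℝ)/2) * (Hess n f x).det ^ (e - 1)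
      = (Hess n f x).det ^ (r - 2) := by
    rw [← Real.rpow_add hd]; congr 1; rw [hedef]; ring
  have h2 : (Hess n f x).det ^ (r - 1) * (Hess n f x).det ^ (r - 1)
      = (Hess n f x).det ^ r * (Hess n f x).det ^ (r - 2) := by
    rw [← Real.rpow_add hd, ← Real.rpow_add hd]; congr 1; ring
  have hne2 : ((n:ℝ) + 2) ≠ 0 := by positivity
  have hcoef : r * e = (((n:ℝ) + 4) / 2) * (r * r) := by
    rw [hedef, hrdef]; field_simp; ring
  have hdr : (Hess n f x).det ^ r ≠ 0 := (Real.rpow_pos_of_pos hd r).ne'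
  calc (Hess n f x).det ^ (-(1:ℝ)/2) * (r * e * (Hess n f x).det ^ (e - 1) * Q)
      = (r * e) * ((Hess n f x).det ^ (-(1:ℝ)/2) * (Hess n f x).det ^ (e - 1)) * Q := by
        ring
    _ = (((n:ℝ) + 4) / 2) * (r * r) * (Hess n f x).det ^ (r - 2) * Q := by
        rw [h1, hcoef]
    _ = (((n:ℝ) + 4) / 2) * (r * r * ((Hess n f x).det ^ (r - 1)
          * (Hess n f x).det ^ (r - 1)) * Q) / (Hess n f x).det ^ r := by
        rw [h2]; field_simp

end AuxLemmas

/-- Equation (4) of the paper: for an affine Kähler Ricci flat potential,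
`Δ_g ρ = ((n+4)/2)‖∇ρ‖²_g / ρ`. -/
theorem laplacian_rho_ricci_flat
    (n : ℕ) (hn : 1 ≤ n) (Ω : Set (Fin n → ℝ)) (hΩ : IsOpen Ω)
    (f : (Fin n → ℝ) → ℝ) (hf : ContDiffOn ℝ (⊤ : ℕ∞) f Ω)
    (hpos : ∀ x ∈ Ω, (Hess n f x).PosDef)
    (hric : ∀ x ∈ Ω, ∀ i j : Fin n,
      pder n i (pder n j (fun y => Real.log (Hess n f y).det)) x = 0) :
    ∀ x ∈ Ω,
      lapBel n f (rho n f) x =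
        (((n : ℝ) + 4) / 2) * gradInner n f (rho n f) (rho n f) x / rho n f x := by
  exact laplacian_rho_ricci_flat' hn hΩ hf hpos hric
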